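/- arXiv:2207.13971 — 4 statements merged into one kernel-verified Lean document; each statement's English description precedes it below -/
import Mathlib

section
/- Let $\mathcal{H}$ be a Hilbert space and let $(V_n)_{n\geq 0}$ be a nested sequence of closed subspaces with $V_n \subset V_{n+1}$, generated as $V_n = \mathrm{span}\{v_{\lambda_1},\dots,v_{\lambda_n}\}$ for Riesz representers of functionals $\lambda_1,\lambda_2,\dots \in \mathcal{H}'$. For $u \in \mathcal{H}$ set $s_n := \Pi_{V_n}(u)$, $r_n := u - s_n$, and $P_n(\lambda) := \|v_\lambda - \Pi_{V_n}(v_\lambda)\|$. Then for every $n \geq 1$: $\left[ \prod_{i=n+1}^{2n} |\lambda_{i+1}(r_i)| \right]^{1/n} \leq n^{-1/2} \cdot \| u - s_{n+1} \|_{\mathcal{H}} \cdot \left[ \prod_{i=n+1}^{2n} P_{i}(\lambda_{i+1}) \right]^{1/n}$, provided $P_i(\lambda_{i+1}) \neq 0$ for the relevant indices. -/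
/-!
Put `v_j = (toDual ℝ H).symm (lam j)` and `w_i = v_{i+1} - Π_{V_i} v_{i+1}`, so that
`P_i(λ_{i+1}) = ‖w_i‖`. For `i > n` the residual `r_i` is orthogonal to `V_i` and
`r_i - r_{n+1} ∈ V_i`, whence the Newton identity `λ_{i+1}(r_i) = ⟪w_i, r_{n+1}⟫`. The `w_i`
are pairwise orthogonal, so by Bessel's inequality the normalized coefficients
`⟪w_i / ‖w_i‖, r_{n+1}⟫` have square sum at most `‖r_{n+1}‖²`, and AM–GM bounds their
geometric mean by `n^{-1/2} ‖r_{n+1}‖`.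
-/

open scoped RealInnerProductSpace

open Finset

section Orthogonal

variable {ι E : Type*} [NormedAddCommGroup E] [InnerProductSpace ℝ E]

theorem orthonormal_normalize_of_pairwise {w : ι → E}
    (hw : Pairwise fun i j => ⟪w i, w j⟫ = 0) :
    Orthonormal ℝ fun i : {i // w i ≠ 0} => ‖w i‖⁻¹ • w i := by
  refine ⟨fun i => ?_, fun i j hij => ?_⟩
  · rw [norm_smul, norm_inv, norm_norm, inv_mul_cancel₀ (norm_ne_zero_iff.2 i.2)]
  · simp only [real_inner_smul_left, real_inner_smul_right, hw (Subtype.coe_ne_coe.2 hij),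
      mul_zero]

theorem sum_sq_inner_normalize_le {w : ι → E} (hw : Pairwise fun i j => ⟪w i, w j⟫ = 0)
    (T : Finset ι) (x : E) : ∑ i ∈ T, ⟪‖w i‖⁻¹ • w i, x⟫ ^ 2 ≤ ‖x‖ ^ 2 := by
  classical
  calc ∑ i ∈ T, ⟪‖w i‖⁻¹ • w i, x⟫ ^ 2
      = ∑ i ∈ T.subtype (fun i => w i ≠ 0), ⟪‖w i‖⁻¹ • w i, x⟫ ^ 2 := by
        rw [sum_subtype_eq_sum_filter (fun i => ⟪‖w i‖⁻¹ • w i, x⟫ ^ 2), sum_filter_of_ne]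
        rintro i - hi hwi
        simp [hwi] at hi
    _ ≤ ‖x‖ ^ 2 := by
        simpa only [Real.norm_eq_abs, sq_abs] using
          (orthonormal_normalize_of_pairwise hw).sum_inner_products_le x

theorem inner_eq_norm_mul_inner_normalize (w x : E) : ⟪w, x⟫ = ‖w‖ * ⟪‖w‖⁻¹ • w, x⟫ := by
  rcases eq_or_ne w 0 with rfl | hw
  · simp
  · rw [real_inner_smul_left, mul_inv_cancel_left₀ (norm_ne_zero_iff.2 hw)]

end Orthogonal

theorem prod_abs_rpow_inv_card_le_of_sum_sq_le {ι : Type*} {T : Finset ι} (hT : T.Nonempty)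
    (c : ι → ℝ) {M : ℝ} (hM : 0 ≤ M) (hc : ∑ i ∈ T, c i ^ 2 ≤ M ^ 2) :
    (∏ i ∈ T, |c i|) ^ ((#T : ℝ)⁻¹) ≤ (#T : ℝ) ^ (-(1 : ℝ) / 2) * M := by
  have hcard : (0 : ℝ) < #T := by exact_mod_cast hT.card_pos
  have hamgm := Real.geom_mean_le_arith_mean T (fun _ => 1) (fun i => c i ^ 2)
    (fun _ _ => zero_le_one) (by simpa using hT.card_pos) (fun i _ => sq_nonneg (c i))
  simp only [Real.rpow_one, sum_const, nsmul_eq_mul, mul_one, one_mul] at hamgm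
  refine le_of_pow_le_pow_left₀ two_ne_zero (by positivity) ?_
  calc ((∏ i ∈ T, |c i|) ^ ((#T : ℝ)⁻¹)) ^ 2
      = (∏ i ∈ T, c i ^ 2) ^ ((#T : ℝ)⁻¹) := by
        rw [← Real.rpow_natCast, ← Real.rpow_mul (by positivity), mul_comm, Real.rpow_mul
          (by positivity), Real.rpow_natCast, ← prod_pow]
        simp only [sq_abs]
    _ ≤ (∑ i ∈ T, c i ^ 2) / #T := hamgm
    _ ≤ M ^ 2 / #T := by gcongr
    _ = ((#T : ℝ) ^ (-(1 : ℝ) / 2) * M) ^ 2 := by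
        rw [mul_pow, ← Real.rpow_natCast ((#T : ℝ) ^ _) 2, ← Real.rpow_mul hcard.le]
        norm_num [Real.rpow_neg_one, div_eq_inv_mul]

theorem prod_abs_inner_rpow_inv_card_le {ι E : Type*} [NormedAddCommGroup E]
    [InnerProductSpace ℝ E] {w : ι → E} (hw : Pairwise fun i j => ⟪w i, w j⟫ = 0)
    {T : Finset ι} (hT : T.Nonempty) (x : E) :
    (∏ i ∈ T, |⟪w i, x⟫|) ^ ((#T : ℝ)⁻¹)
      ≤ (#T : ℝ) ^ (-(1 : ℝ) / 2) * ‖x‖ * (∏ i ∈ T, ‖w i‖) ^ ((#T : ℝ)⁻¹) := by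
  have hsplit :
      ∏ i ∈ T, |⟪w i, x⟫| = (∏ i ∈ T, ‖w i‖) * ∏ i ∈ T, |⟪‖w i‖⁻¹ • w i, x⟫| := by
    rw [← prod_mul_distrib]
    refine prod_congr rfl fun i _ => ?_
    rw [inner_eq_norm_mul_inner_normalize, abs_mul, abs_norm]
  rw [hsplit, Real.mul_rpow (by positivity) (by positivity), mul_comm]
  gcongr
  exact prod_abs_rpow_inv_card_le_of_sum_sq_le hT _ (norm_nonneg x)
    (sum_sq_inner_normalize_le hw T x)

section Projection

variable {E : Type*} [NormedAddCommGroup E] [InnerProductSpace ℝ E]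

theorem Submodule.infDist_eq_norm_sub_starProjection (K : Submodule ℝ E)
    [K.HasOrthogonalProjection] (v : E) :
    Metric.infDist v (K : Set E) = ‖v - K.starProjection v‖ := by
  rw [Metric.infDist_eq_iInf, Submodule.starProjection_minimal]
  simp [dist_eq_norm]

theorem Submodule.inner_eq_inner_sub_starProjection {K : Submodule ℝ E}
    [K.HasOrthogonalProjection] (v : E) {y z : E} (hy : y ∈ Kᗮ) (hyz : y - z ∈ K) :
    ⟪v, y⟫ = ⟪v - K.starProjection v, z⟫ := by
  have hv : ⟪K.starProjection v, y⟫ = 0 :=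
    K.inner_right_of_mem_orthogonal (K.starProjection_apply_mem v) hy
  have hw : ⟪v - K.starProjection v, y - z⟫ = 0 :=
    K.inner_left_of_mem_orthogonal hyz (K.sub_starProjection_mem_orthogonal v)
  calc ⟪v, y⟫ = ⟪v - K.starProjection v, y⟫ := by rw [inner_sub_left, hv, sub_zero]
    _ = ⟪v - K.starProjection v, z⟫ + ⟪v - K.starProjection v, y - z⟫ := by
        rw [← inner_add_right, add_sub_cancel]
    _ = ⟪v - K.starProjection v, z⟫ := by rw [hw, add_zero]

theorem pairwise_inner_sub_starProjection_eq_zero {K : ℕ → Submodule ℝ E}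
    [∀ i, (K i).HasOrthogonalProjection] (hK : Monotone K) {x : ℕ → E}
    (hx : ∀ i, x i ∈ K (i + 1)) :
    Pairwise fun i j =>
      ⟪x i - (K i).starProjection (x i), x j - (K j).starProjection (x j)⟫ = 0 := by
  have key : ∀ i j, i < j →
      ⟪x i - (K i).starProjection (x i), x j - (K j).starProjection (x j)⟫ = 0 := by
    intro i j hij
    have hmem : x i - (K i).starProjection (x i) ∈ K j :=
      hK hij (sub_mem (hx i) (hK i.le_succ ((K i).starProjection_apply_mem _)))
    exact (K j).inner_right_of_mem_orthogonal hmem ((K j).sub_starProjection_mem_orthogonal _)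
  intro i j hij
  rcases hij.lt_or_gt with h | h
  · exact key i j h
  · rw [real_inner_comm]; exact key j i h

end Projection

theorem product_estimate_generalized_interpolation_general {H : Type*} [NormedAddCommGroup H]
    [InnerProductSpace ℝ H] [CompleteSpace H]
    (lam : ℕ → StrongDual ℝ H) (u : H)
    (V : ℕ → Submodule ℝ H)
    (hV : ∀ n, V n = Submodule.span ℝ
      ((fun j => (InnerProductSpace.toDual ℝ H).symm (lam j)) '' Set.Icc 1 n))
    (s : ℕ → H)
    (hs : ∀ n, s n ∈ V n ∧ ∀ w ∈ V n, ⟪u - s n, w⟫ = 0)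
    (P : ℕ → StrongDual ℝ H → ℝ)
    (hP : ∀ n l, P n l = Metric.infDist ((InnerProductSpace.toDual ℝ H).symm l)
      (V n : Set H))
    (n : ℕ) (hn : 1 ≤ n) :
    (∏ i ∈ Finset.Icc (n + 1) (2 * n), |lam (i + 1) (u - s i)|) ^ ((n : ℝ)⁻¹)
      ≤ (n : ℝ) ^ (-(1 : ℝ) / 2) * ‖u - s (n + 1)‖ *
        (∏ i ∈ Finset.Icc (n + 1) (2 * n), P i (lam (i + 1))) ^ ((n : ℝ)⁻¹) := by
  set v : ℕ → H := fun j => (InnerProductSpace.toDual ℝ H).symm (lam j)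
  have hmono : Monotone V := fun i j hij => by
    rw [hV i, hV j]
    exact Submodule.span_mono (Set.image_mono (Set.Icc_subset_Icc_right hij))
  have : ∀ i, FiniteDimensional ℝ (V i) := fun i => by
    rw [hV i]
    exact FiniteDimensional.span_of_finite ℝ ((Set.finite_Icc 1 i).image _)
  have hv : ∀ i, v (i + 1) ∈ V (i + 1) := fun i => by
    rw [hV]
    exact Submodule.subset_span ⟨i + 1, ⟨by omega, le_rfl⟩, rfl⟩
  set w : ℕ → H := fun i => v (i + 1) - (V i).starProjection (v (i + 1))
  have hnewton : ∀ i ∈ Finset.Icc (n + 1) (2 * n),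
      |lam (i + 1) (u - s i)| = |⟪w i, u - s (n + 1)⟫| := fun i hi => by
    rw [← InnerProductSpace.toDual_symm_apply]
    have hr : u - s i ∈ (V i)ᗮ := ((V i).mem_orthogonal' _).2 (hs i).2
    refine congrArg _ ((V i).inner_eq_inner_sub_starProjection _ hr ?_)
    rw [sub_sub_sub_cancel_left]
    exact sub_mem (hmono (Finset.mem_Icc.1 hi).1 (hs (n + 1)).1) (hs i).1
  have hpower : ∀ i, P i (lam (i + 1)) = ‖w i‖ := fun i =>
    (hP i _).trans ((V i).infDist_eq_norm_sub_starProjection _)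
  have hcard : #(Finset.Icc (n + 1) (2 * n)) = n := by simp only [Nat.card_Icc]; omega
  have hest := prod_abs_inner_rpow_inv_card_le
    (pairwise_inner_sub_starProjection_eq_zero hmono hv)
    (Finset.nonempty_Icc.2 (by omega : n + 1 ≤ 2 * n)) (u - s (n + 1))
  rw [hcard] at hest
  rwa [prod_congr rfl hnewton, prod_congr rfl fun i _ => hpower i]

/-- Product estimate for generalized greedy interpolation: with nested subspaces
`V n = span{v_{λ_1},…,v_{λ_n}}` of Riesz representers, projections `s n = Π_{V n} u`,
residuals `r_i = u - s i` and power function `P n λ = dist(v_λ, V n)`, it holds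
`[∏_{i=n+1}^{2n} |λ_{i+1}(r_i)|]^{1/n} ≤ n^{-1/2} ‖u - s_{n+1}‖ [∏_{i=n+1}^{2n} P_i(λ_{i+1})]^{1/n}`. -/
theorem product_estimate_generalized_interpolation {H : Type*} [NormedAddCommGroup H]
    [InnerProductSpace ℝ H] [CompleteSpace H]
    (lam : ℕ → StrongDual ℝ H) (u : H)
    (V : ℕ → Submodule ℝ H)
    (hV : ∀ n, V n = Submodule.span ℝ
      ((fun j => (InnerProductSpace.toDual ℝ H).symm (lam j)) '' Set.Icc 1 n))
    (s : ℕ → H)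
    (hs : ∀ n, s n ∈ V n ∧ ∀ w ∈ V n, ⟪u - s n, w⟫ = 0)
    (P : ℕ → StrongDual ℝ H → ℝ)
    (hP : ∀ n l, P n l = Metric.infDist ((InnerProductSpace.toDual ℝ H).symm l)
      (V n : Set H))
    (n : ℕ) (hn : 1 ≤ n)
    (hPne : ∀ i ∈ Finset.Icc (n + 1) (2 * n), P i (lam (i + 1)) ≠ 0) :
    (∏ i ∈ Finset.Icc (n + 1) (2 * n), |lam (i + 1) (u - s i)|) ^ ((n : ℝ)⁻¹)
      ≤ (n : ℝ) ^ (-(1 : ℝ) / 2) * ‖u - s (n + 1)‖ *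
        (∏ i ∈ Finset.Icc (n + 1) (2 * n), P i (lam (i + 1))) ^ ((n : ℝ)⁻¹) :=
  product_estimate_generalized_interpolation_general lam u V hV s hs P hP n hn
end

section
/- Let $\mathcal{H}$ be a Hilbert space and consider a PDE-$\beta$-greedy algorithm with $\beta \in (0,1]$ applied to $u \in \mathcal{H}$ with functional set $\Lambda$. With residuals $r_i$ and power functions $P_i$ as usual, it holds for $n \geq 1$: $\left[ \prod_{i=n+1}^{2n} \sup_{\lambda \in \Lambda} |\lambda(r_i)| \right]^{1/n} \leq n^{-\beta/2} \cdot \| r_{n+1} \|_{\mathcal{H}} \cdot \left[ \prod_{i=n+1}^{2n} P_{i}(\lambda_{i+1}) \right]^{1/n}$. -/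
open scoped RealInnerProductSpace

/-! Because the Riesz representer of `λ_{i+1}` lies in `V_{i+1}` and `s_{i+1} - s_i ⊥ V_i`,
each greedy choice satisfies `|λ_{i+1}(r_i)| ≤ P_i(λ_{i+1}) ‖s_{i+1} - s_i‖`. The increments
`s_{i+1} - s_i` are orthogonal, so `∑_{i=n+1}^{2n} ‖s_{i+1} - s_i‖² ≤ ‖r_{n+1}‖²`, and AM-GM gives
the case `β = 1`. For general `β`, the greedy rule together with `|λ(r_i)| ≤ P_i(λ) ‖r_i‖` bounds
`sup_λ |λ(r_i)|` by `|λ_{i+1}(r_i)|^β P_i(λ_{i+1})^{1-β} ‖r_i‖^{1-β}`, and after taking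
geometric means the case `β = 1` bounds the first factor. -/

lemma rpow_mul_rpow_one_sub {x : ℝ} (hx : 0 ≤ x) (β : ℝ) : x ^ β * x ^ (1 - β) = x := by
  rw [← Real.rpow_add' hx (by simp), add_sub_cancel, Real.rpow_one]

lemma le_mul_rpow_one_sub_of_le_mul {a q r c β : ℝ} (ha : 0 ≤ a) (hq : 0 ≤ q) (hr : 0 ≤ r)
    (hβ : β ≤ 1) (hle : a ≤ q * r) (hc : a ^ β * q ^ (1 - β) ≤ c) : a ≤ c * r ^ (1 - β) :=
  have h1β : 0 ≤ 1 - β := by linarith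
  calc a = a ^ β * a ^ (1 - β) := (rpow_mul_rpow_one_sub ha β).symm
    _ ≤ a ^ β * (q * r) ^ (1 - β) := by gcongr
    _ = a ^ β * q ^ (1 - β) * r ^ (1 - β) := by rw [Real.mul_rpow hq hr, mul_assoc]
    _ ≤ c * r ^ (1 - β) := by gcongr

section GeomMean

variable {ι : Type*} {I : Finset ι} {f g : ι → ℝ}

noncomputable def geomMean (I : Finset ι) (f : ι → ℝ) : ℝ :=
  (∏ i ∈ I, f i) ^ ((I.card : ℝ)⁻¹)

lemma geomMean_nonneg (hf : ∀ i ∈ I, 0 ≤ f i) : 0 ≤ geomMean I f :=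
  Real.rpow_nonneg (Finset.prod_nonneg hf) _

lemma geomMean_le_geomMean (hf : ∀ i ∈ I, 0 ≤ f i) (hfg : ∀ i ∈ I, f i ≤ g i) :
    geomMean I f ≤ geomMean I g :=
  Real.rpow_le_rpow (Finset.prod_nonneg hf) (Finset.prod_le_prod hf hfg) (by positivity)

lemma geomMean_mul (hf : ∀ i ∈ I, 0 ≤ f i) (hg : ∀ i ∈ I, 0 ≤ g i) :
    geomMean I (fun i => f i * g i) = geomMean I f * geomMean I g := by
  rw [geomMean, Finset.prod_mul_distrib,
    Real.mul_rpow (Finset.prod_nonneg hf) (Finset.prod_nonneg hg), geomMean, geomMean]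

lemma geomMean_rpow (hf : ∀ i ∈ I, 0 ≤ f i) (β : ℝ) :
    geomMean I (fun i => f i ^ β) = geomMean I f ^ β := by
  rw [geomMean, geomMean, Real.finsetProd_rpow I f hf, ← Real.rpow_mul (Finset.prod_nonneg hf),
    ← Real.rpow_mul (Finset.prod_nonneg hf), mul_comm]

lemma geomMean_const (hI : I.Nonempty) {c : ℝ} (hc : 0 ≤ c) : geomMean I (fun _ => c) = c := by
  have hcard : (I.card : ℝ) ≠ 0 := by exact_mod_cast hI.card_ne_zero
  rw [geomMean, Finset.prod_const, ← Real.rpow_natCast, ← Real.rpow_mul hc,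
    mul_inv_cancel₀ hcard, Real.rpow_one]

lemma geomMean_le_of_sum_sq_le (hI : I.Nonempty) (hf : ∀ i ∈ I, 0 ≤ f i) {R : ℝ} (hR : 0 ≤ R)
    (hsum : ∑ i ∈ I, f i ^ 2 ≤ R ^ 2) : geomMean I f ≤ (I.card : ℝ) ^ (-(1 / 2) : ℝ) * R := by
  have hcard : (0 : ℝ) < I.card := by exact_mod_cast hI.card_pos
  have hamgm : geomMean I (fun i => f i ^ (2 : ℝ)) ≤ (∑ i ∈ I, f i ^ 2) / I.card := by
    simpa [geomMean] using Real.geom_mean_le_arith_mean I (fun _ => 1) (fun i => f i ^ (2 : ℝ))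
      (fun _ _ => zero_le_one) (by simpa using hI) (fun i hi => Real.rpow_nonneg (hf i hi) _)
  rw [geomMean_rpow hf, Real.rpow_two] at hamgm
  have hsq : ((I.card : ℝ) ^ (-(1 / 2) : ℝ)) ^ 2 = (I.card : ℝ)⁻¹ := by
    rw [← Real.rpow_natCast, ← Real.rpow_mul hcard.le, ← Real.rpow_neg_one]
    norm_num
  rw [← pow_le_pow_iff_left₀ (geomMean_nonneg hf) (by positivity) two_ne_zero, mul_pow, hsq,
    inv_mul_eq_div]
  exact hamgm.trans (div_le_div_of_nonneg_right hsum hcard.le)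

lemma geomMean_le_of_le_rpow_mul_rpow (hI : I.Nonempty) {a b p : ι → ℝ} {β C ρ : ℝ}
    (ha : ∀ i ∈ I, 0 ≤ a i) (hb : ∀ i ∈ I, 0 ≤ b i) (hp : ∀ i ∈ I, 0 ≤ p i)
    (hβ : 0 ≤ β) (hC : 0 ≤ C) (hρ : 0 ≤ ρ)
    (hle : ∀ i ∈ I, a i ≤ b i ^ β * p i ^ (1 - β) * ρ ^ (1 - β))
    (hbp : geomMean I b ≤ C * ρ * geomMean I p) :
    geomMean I a ≤ C ^ β * ρ * geomMean I p := by
  have hbG := geomMean_nonneg hb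
  have hpG := geomMean_nonneg hp
  have hpG' := Real.rpow_nonneg hpG (1 - β)
  calc geomMean I a ≤ geomMean I (fun i => b i ^ β * p i ^ (1 - β) * ρ ^ (1 - β)) :=
        geomMean_le_geomMean ha hle
    _ = geomMean I b ^ β * geomMean I p ^ (1 - β) * ρ ^ (1 - β) := by
        rw [geomMean_mul (f := fun i => b i ^ β * p i ^ (1 - β)) (g := fun _ => ρ ^ (1 - β))
            (fun i hi => mul_nonneg (Real.rpow_nonneg (hb i hi) _) (Real.rpow_nonneg (hp i hi) _))
            (fun _ _ => Real.rpow_nonneg hρ _),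
          geomMean_mul (fun i hi => Real.rpow_nonneg (hb i hi) _)
            (fun i hi => Real.rpow_nonneg (hp i hi) _),
          geomMean_rpow hb, geomMean_rpow hp, geomMean_const hI (Real.rpow_nonneg hρ _)]
    _ ≤ (C * ρ * geomMean I p) ^ β * geomMean I p ^ (1 - β) * ρ ^ (1 - β) := by gcongr
    _ = C ^ β * (ρ ^ β * ρ ^ (1 - β)) * (geomMean I p ^ β * geomMean I p ^ (1 - β)) := by
        rw [Real.mul_rpow (by positivity) hpG, Real.mul_rpow hC hρ]
        ring
    _ = C ^ β * ρ * geomMean I p := by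
        rw [rpow_mul_rpow_one_sub hρ, rpow_mul_rpow_one_sub hpG]

end GeomMean

section Approximation

variable {H : Type*} [NormedAddCommGroup H] [InnerProductSpace ℝ H]

lemma abs_inner_le_infDist_mul_norm {K : Submodule ℝ H} {x : H} (hx : x ∈ Kᗮ) (v : H) :
    |⟪v, x⟫| ≤ Metric.infDist v K * ‖x‖ := by
  rcases eq_or_ne x 0 with rfl | hx0
  · simp
  have hxpos : 0 < ‖x‖ := norm_pos_iff.mpr hx0
  rw [← div_le_iff₀ hxpos, Metric.le_infDist ⟨0, K.zero_mem⟩]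
  intro w hw
  rw [div_le_iff₀ hxpos, dist_eq_norm]
  calc |⟪v, x⟫| = |⟪v - w, x⟫| := by
        rw [inner_sub_left, Submodule.inner_right_of_mem_orthogonal hw hx, sub_zero]
    _ ≤ ‖v - w‖ * ‖x‖ := abs_real_inner_le_norm _ _

variable {V : ℕ → Submodule ℝ H} {u : H} {s : ℕ → H}

lemma increment_mem_orthogonal (hV : Monotone V) (hr : ∀ n, u - s n ∈ (V n)ᗮ) (i : ℕ) :
    s (i + 1) - s i ∈ (V i)ᗮ := by
  have hr' : u - s (i + 1) ∈ (V i)ᗮ := Submodule.orthogonal_le (hV i.le_succ) (hr (i + 1))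
  simpa using Submodule.sub_mem _ (hr i) hr'

lemma norm_sq_residual_eq (hV : Monotone V) (hs : ∀ n, s n ∈ V n) (hr : ∀ n, u - s n ∈ (V n)ᗮ)
    (i : ℕ) : ‖u - s i‖ ^ 2 = ‖u - s (i + 1)‖ ^ 2 + ‖s (i + 1) - s i‖ ^ 2 := by
  have hinc : s (i + 1) - s i ∈ V (i + 1) :=
    Submodule.sub_mem _ (hs (i + 1)) (hV i.le_succ (hs i))
  rw [← sub_add_sub_cancel u (s (i + 1)) (s i), norm_add_sq_real,
    Submodule.inner_left_of_mem_orthogonal hinc (hr (i + 1))]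
  ring

lemma antitone_norm_residual (hV : Monotone V) (hs : ∀ n, s n ∈ V n)
    (hr : ∀ n, u - s n ∈ (V n)ᗮ) : Antitone fun n => ‖u - s n‖ :=
  antitone_nat_of_succ_le fun i =>
    (pow_le_pow_iff_left₀ (norm_nonneg _) (norm_nonneg _) two_ne_zero).mp <| by
      rw [norm_sq_residual_eq hV hs hr i]
      exact le_add_of_nonneg_right (sq_nonneg _)

lemma sum_sq_norm_increment_le (hV : Monotone V) (hs : ∀ n, s n ∈ V n)
    (hr : ∀ n, u - s n ∈ (V n)ᗮ) {a b : ℕ} (hab : a ≤ b) :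
    ∑ i ∈ Finset.Icc a b, ‖s (i + 1) - s i‖ ^ 2 ≤ ‖u - s a‖ ^ 2 := by
  have htel : ∑ i ∈ Finset.Icc a b, ‖s (i + 1) - s i‖ ^ 2
      = ‖u - s a‖ ^ 2 - ‖u - s (b + 1)‖ ^ 2 := by
    rw [← neg_sub_neg, ← Finset.sum_Icc_sub hab (fun i => -‖u - s i‖ ^ 2)]
    refine Finset.sum_congr rfl fun i _ => ?_
    rw [norm_sq_residual_eq hV hs hr i]
    ring
  rw [htel]
  exact sub_le_self _ (sq_nonneg _)

variable [CompleteSpace H]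

/-- The power function `P(λ) = ‖v_λ - Π_K v_λ‖`, written as a distance so that no projection
onto `K` is needed. -/
noncomputable def powerFun (K : Submodule ℝ H) (l : StrongDual ℝ H) : ℝ :=
  Metric.infDist ((InnerProductSpace.toDual ℝ H).symm l) K

lemma powerFun_nonneg (K : Submodule ℝ H) (l : StrongDual ℝ H) : 0 ≤ powerFun K l :=
  Metric.infDist_nonneg

lemma abs_apply_le_powerFun_mul_norm {K : Submodule ℝ H} {x : H} (hx : x ∈ Kᗮ)
    (l : StrongDual ℝ H) : |l x| ≤ powerFun K l * ‖x‖ := by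
  rw [← InnerProductSpace.toDual_symm_apply]
  exact abs_inner_le_infDist_mul_norm hx _

lemma abs_apply_residual_le_powerFun_mul_norm_increment (hV : Monotone V)
    (hr : ∀ n, u - s n ∈ (V n)ᗮ) {l : StrongDual ℝ H} {i : ℕ}
    (hl : (InnerProductSpace.toDual ℝ H).symm l ∈ V (i + 1)) :
    |l (u - s i)| ≤ powerFun (V i) l * ‖s (i + 1) - s i‖ := by
  have hshift : l (u - s i) = l (s (i + 1) - s i) := by
    rw [← sub_add_sub_cancel u (s (i + 1)) (s i), map_add, ← InnerProductSpace.toDual_symm_apply,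
      Submodule.inner_right_of_mem_orthogonal hl (hr (i + 1)), zero_add]
  rw [hshift]
  exact abs_apply_le_powerFun_mul_norm (increment_mem_orthogonal hV hr i) l

lemma iSup_abs_apply_le_of_greedy {Λ : Set (StrongDual ℝ H)} {K : Submodule ℝ H} {x : H}
    (hx : x ∈ Kᗮ) {β : ℝ} (hβ : β ≤ 1) {l₀ : StrongDual ℝ H}
    (hgreedy : ∀ l ∈ Λ,
      |l x| ^ β * powerFun K l ^ (1 - β) ≤ |l₀ x| ^ β * powerFun K l₀ ^ (1 - β)) :
    ⨆ l : Λ, |(l : StrongDual ℝ H) x| ≤ |l₀ x| ^ β * powerFun K l₀ ^ (1 - β) * ‖x‖ ^ (1 - β) := by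
  refine Real.iSup_le (fun l => ?_) (mul_nonneg (mul_nonneg (Real.rpow_nonneg (abs_nonneg _) _)
    (Real.rpow_nonneg (powerFun_nonneg K l₀) _)) (Real.rpow_nonneg (norm_nonneg _) _))
  exact le_mul_rpow_one_sub_of_le_mul (abs_nonneg _) (powerFun_nonneg K l) (norm_nonneg _) hβ
    (abs_apply_le_powerFun_mul_norm hx l) (hgreedy l l.2)

lemma geomMean_abs_apply_residual_le (hV : Monotone V) (hs : ∀ n, s n ∈ V n)
    (hr : ∀ n, u - s n ∈ (V n)ᗮ) {lam : ℕ → StrongDual ℝ H}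
    (hlam : ∀ i, (InnerProductSpace.toDual ℝ H).symm (lam (i + 1)) ∈ V (i + 1))
    {a b : ℕ} (hab : a ≤ b) :
    geomMean (Finset.Icc a b) (fun i => |lam (i + 1) (u - s i)|)
      ≤ ((Finset.Icc a b).card : ℝ) ^ (-(1 / 2) : ℝ) * ‖u - s a‖ *
        geomMean (Finset.Icc a b) (fun i => powerFun (V i) (lam (i + 1))) := by
  have hP := fun i (_ : i ∈ Finset.Icc a b) => powerFun_nonneg (V i) (lam (i + 1))
  have hd := fun i (_ : i ∈ Finset.Icc a b) => norm_nonneg (s (i + 1) - s i)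
  calc geomMean (Finset.Icc a b) (fun i => |lam (i + 1) (u - s i)|)
      ≤ geomMean (Finset.Icc a b) (fun i => powerFun (V i) (lam (i + 1)) * ‖s (i + 1) - s i‖) :=
        geomMean_le_geomMean (fun _ _ => abs_nonneg _)
          fun i _ => abs_apply_residual_le_powerFun_mul_norm_increment hV hr (hlam i)
    _ = geomMean (Finset.Icc a b) (fun i => powerFun (V i) (lam (i + 1))) *
          geomMean (Finset.Icc a b) (fun i => ‖s (i + 1) - s i‖) := geomMean_mul hP hd
    _ ≤ geomMean (Finset.Icc a b) (fun i => powerFun (V i) (lam (i + 1))) *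
          (((Finset.Icc a b).card : ℝ) ^ (-(1 / 2) : ℝ) * ‖u - s a‖) := by
        gcongr
        · exact geomMean_nonneg hP
        · exact geomMean_le_of_sum_sq_le (Finset.nonempty_Icc.mpr hab) hd (norm_nonneg _)
            (sum_sq_norm_increment_le hV hs hr hab)
    _ = _ := by ring

end Approximation

theorem pde_beta_greedy_product_bound_general {H : Type*} [NormedAddCommGroup H]
    [InnerProductSpace ℝ H] [CompleteSpace H]
    (Λ : Set (StrongDual ℝ H)) (u : H)
    (lam : ℕ → StrongDual ℝ H)
    (V : ℕ → Submodule ℝ H)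
    (hV : ∀ n, V n = Submodule.span ℝ
      ((fun j => (InnerProductSpace.toDual ℝ H).symm (lam j)) '' Set.Icc 1 n))
    (s : ℕ → H)
    (hs : ∀ n, s n ∈ V n ∧ ∀ w ∈ V n, ⟪u - s n, w⟫ = 0)
    (P : ℕ → StrongDual ℝ H → ℝ)
    (hP : ∀ n l, P n l = Metric.infDist ((InnerProductSpace.toDual ℝ H).symm l)
      (V n : Set H))
    (β : ℝ) (hβ : β ∈ Set.Ioc (0 : ℝ) 1)
    (hgreedy : ∀ i, ∀ l ∈ Λ, |l (u - s i)| ^ β * P i l ^ (1 - β)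
      ≤ |lam (i + 1) (u - s i)| ^ β * P i (lam (i + 1)) ^ (1 - β))
    (n : ℕ) (hn : 1 ≤ n) :
    (∏ i ∈ Finset.Icc (n + 1) (2 * n),
        ⨆ l : Λ, |(l : StrongDual ℝ H) (u - s i)|) ^ ((n : ℝ)⁻¹)
      ≤ (n : ℝ) ^ (-β / 2) * ‖u - s (n + 1)‖ *
        (∏ i ∈ Finset.Icc (n + 1) (2 * n), P i (lam (i + 1))) ^ ((n : ℝ)⁻¹) := by
  obtain ⟨hβ0, hβ1⟩ := hβ
  obtain rfl : P = fun i => powerFun (V i) := funext₂ hP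
  have hVmono : Monotone V := fun a b hab => by
    rw [hV, hV]
    exact Submodule.span_mono (Set.image_mono (Set.Icc_subset_Icc_right hab))
  have hsV : ∀ i, s i ∈ V i := fun i => (hs i).1
  have hr : ∀ i, u - s i ∈ (V i)ᗮ := fun i => (Submodule.mem_orthogonal' _ _).mpr (hs i).2
  have hlam : ∀ i, (InnerProductSpace.toDual ℝ H).symm (lam (i + 1)) ∈ V (i + 1) := fun i => by
    rw [hV]
    exact Submodule.subset_span ⟨i + 1, ⟨le_add_self, le_rfl⟩, rfl⟩
  have hsup : ∀ i ∈ Finset.Icc (n + 1) (2 * n), ⨆ l : Λ, |(l : StrongDual ℝ H) (u - s i)|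
      ≤ |lam (i + 1) (u - s i)| ^ β * powerFun (V i) (lam (i + 1)) ^ (1 - β) *
        ‖u - s (n + 1)‖ ^ (1 - β) := fun i hi =>
    (iSup_abs_apply_le_of_greedy (hr i) hβ1 (hgreedy i)).trans <|
      mul_le_mul_of_nonneg_left (Real.rpow_le_rpow (norm_nonneg _)
        (antitone_norm_residual hVmono hsV hr (Finset.mem_Icc.mp hi).1) (by linarith))
        (mul_nonneg (Real.rpow_nonneg (abs_nonneg _) _) (Real.rpow_nonneg (powerFun_nonneg _ _) _))
  have hcard : ((Finset.Icc (n + 1) (2 * n)).card : ℝ) = n := by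
    rw [Nat.card_Icc]
    norm_cast
    omega
  rw [← hcard, show -β / 2 = -(1 / 2) * β by ring, Real.rpow_mul (Nat.cast_nonneg _)]
  exact geomMean_le_of_le_rpow_mul_rpow (Finset.nonempty_Icc.mpr (by omega))
    (fun _ _ => Real.iSup_nonneg fun _ => abs_nonneg _) (fun _ _ => abs_nonneg _)
    (fun _ _ => powerFun_nonneg _ _) hβ0.le (by positivity) (norm_nonneg _) hsup
    (geomMean_abs_apply_residual_le hVmono hsV hr hlam (by omega))

/-- Convergence estimate for PDE-β-greedy algorithms with `β ∈ (0,1]`: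
`[∏_{i=n+1}^{2n} sup_{λ∈Λ}|λ(r_i)|]^{1/n} ≤ n^{-β/2} ‖r_{n+1}‖ [∏_{i=n+1}^{2n} P_i(λ_{i+1})]^{1/n}`. -/
theorem pde_beta_greedy_product_bound {H : Type*} [NormedAddCommGroup H]
    [InnerProductSpace ℝ H] [CompleteSpace H]
    (Λ : Set (StrongDual ℝ H)) (u : H)
    (lam : ℕ → StrongDual ℝ H) (hmem : ∀ i, lam i ∈ Λ)
    (V : ℕ → Submodule ℝ H)
    (hV : ∀ n, V n = Submodule.span ℝ
      ((fun j => (InnerProductSpace.toDual ℝ H).symm (lam j)) '' Set.Icc 1 n))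
    (s : ℕ → H)
    (hs : ∀ n, s n ∈ V n ∧ ∀ w ∈ V n, ⟪u - s n, w⟫ = 0)
    (P : ℕ → StrongDual ℝ H → ℝ)
    (hP : ∀ n l, P n l = Metric.infDist ((InnerProductSpace.toDual ℝ H).symm l)
      (V n : Set H))
    (β : ℝ) (hβ : β ∈ Set.Ioc (0 : ℝ) 1)
    (hgreedy : ∀ i, ∀ l ∈ Λ, |l (u - s i)| ^ β * P i l ^ (1 - β)
      ≤ |lam (i + 1) (u - s i)| ^ β * P i (lam (i + 1)) ^ (1 - β))
    (hattain : ∀ i, ∃ l₀ ∈ Λ, ∀ l ∈ Λ, |l (u - s i)| ≤ |l₀ (u - s i)|)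
    (n : ℕ) (hn : 1 ≤ n)
    (hPne : ∀ i ∈ Finset.Icc (n + 1) (2 * n), P i (lam (i + 1)) ≠ 0) :
    (∏ i ∈ Finset.Icc (n + 1) (2 * n),
        ⨆ l : Λ, |(l : StrongDual ℝ H) (u - s i)|) ^ ((n : ℝ)⁻¹)
      ≤ (n : ℝ) ^ (-β / 2) * ‖u - s (n + 1)‖ *
        (∏ i ∈ Finset.Icc (n + 1) (2 * n), P i (lam (i + 1))) ^ ((n : ℝ)⁻¹) :=
  pde_beta_greedy_product_bound_general Λ u lam V hV s hs P hP β hβ hgreedy n hn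
end

section
/- Let $\mathcal{H}$ be a Hilbert space and consider a PDE-$\beta$-greedy algorithm with $\beta \in (1,\infty)$ applied to $u \in \mathcal{H}$ with functional set $\Lambda$, where additionally $\sup_{\lambda \in \Lambda} P_i(\lambda) \leq 1$ for all $i$. Then for $n \geq 1$: $\left[ \prod_{i=n+1}^{2n} \sup_{\lambda \in \Lambda} |\lambda(r_i)| \right]^{1/n} \leq n^{-1/2} \cdot \| r_{n+1} \|_{\mathcal{H}} \cdot \left[ \prod_{i=n+1}^{2n} P_{i}(\lambda_{i+1})^{1/\beta} \right]^{1/n}$. -/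
/-!
Write `r_i = u - s_i`, let `v` be the Riesz vector of the selected functional `λ_{i+1}` and
`d = v - Π_{V_i} v`, so that `‖d‖ = P_i(λ_{i+1})` and `λ_{i+1}(r_i) = ⟪r_i, d⟫`. Since
`s_i + a d ∈ V_{i+1}` for every real `a`, minimality of `r_{i+1}` makes the quadratic
`a ↦ ‖r_i - a d‖² - ‖r_{i+1}‖²` nonnegative, and its discriminant gives
`λ_{i+1}(r_i)² ≤ P_i(λ_{i+1})² (‖r_i‖² - ‖r_{i+1}‖²)`.
The β-greedy rule and `P_i ≤ 1` bound `sup_λ |λ(r_i)|` by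
`(|λ_{i+1}(r_i)| / P_i(λ_{i+1})) · P_i(λ_{i+1})^{1/β}`. Over `i = n+1, …, 2n` the energy
decrements `‖r_i‖² - ‖r_{i+1}‖²` telescope to at most `‖r_{n+1}‖²`, and AM–GM turns this into
the factor `n^{-1/2} ‖r_{n+1}‖`.
-/

open scoped RealInnerProductSpace
open Finset

-- `q = 0` is allowed: then `q ^ (1 - β) = 0`, and the conclusion `a ≤ 0` uses `b / 0 = 0`.
lemma le_div_mul_rpow_of_rpow_mul_rpow_le {a b p q β : ℝ} (hβ : 1 < β) (ha : 0 ≤ a)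
    (hb : 0 ≤ b) (hp : 0 < p) (hp1 : p ≤ 1) (hq : 0 ≤ q)
    (h : a ^ β * p ^ (1 - β) ≤ b ^ β * q ^ (1 - β)) :
    a ≤ b / q * q ^ (1 / β) := by
  have hβ0 : 0 < β := by linarith
  have hexp : 1 / β - 1 ≠ 0 := by
    rw [sub_ne_zero, ne_eq, div_eq_one_iff_eq hβ0.ne']
    exact hβ.ne
  have hbq : b / q * q ^ (1 / β) = b * q ^ (1 / β - 1) := by
    rw [Real.rpow_sub' hq hexp, Real.rpow_one]
    ring
  rw [hbq, ← Real.rpow_le_rpow_iff ha (by positivity) hβ0]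
  calc a ^ β ≤ a ^ β * p ^ (1 - β) :=
        le_mul_of_one_le_right (by positivity)
          (Real.one_le_rpow_of_pos_of_le_one_of_nonpos hp hp1 (by linarith))
    _ ≤ b ^ β * q ^ (1 - β) := h
    _ = (b * q ^ (1 / β - 1)) ^ β := by
        rw [Real.mul_rpow hb (by positivity), ← Real.rpow_mul hq]
        congr 2
        field_simp

lemma iSup_abs_le_div_mul_rpow_of_greedy {X : Type*} {Λ : Set X} {f p : X → ℝ} {μ : X}
    {β : ℝ} (hβ : 1 < β) (hp : ∀ ℓ, 0 ≤ p ℓ) (hp1 : ∀ ℓ ∈ Λ, p ℓ ≤ 1)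
    (hf : ∀ ℓ, p ℓ = 0 → f ℓ = 0)
    (hgreedy : ∀ ℓ ∈ Λ, |f ℓ| ^ β * p ℓ ^ (1 - β) ≤ |f μ| ^ β * p μ ^ (1 - β)) :
    ⨆ ℓ : Λ, |f ℓ| ≤ |f μ| / p μ * p μ ^ (1 / β) := by
  have hμ := hp μ
  refine Real.iSup_le (fun ⟨ℓ, hℓ⟩ => ?_) (by positivity)
  rcases (hp ℓ).eq_or_lt with hzero | hpos
  · rw [hf ℓ hzero.symm, abs_zero]
    positivity
  · exact le_div_mul_rpow_of_rpow_mul_rpow_le hβ (abs_nonneg _) (abs_nonneg _) hpos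
      (hp1 ℓ hℓ) hμ (hgreedy ℓ hℓ)

lemma prod_rpow_inv_le_of_sq_le_sub_sq {g x : ℕ → ℝ} (hg : ∀ i, 0 ≤ g i) (hx : ∀ i, 0 ≤ x i)
    (hgx : ∀ i, g i ^ 2 ≤ x i ^ 2 - x (i + 1) ^ 2) (m : ℕ) {n : ℕ} (hn : n ≠ 0) :
    (∏ i ∈ Icc (m + 1) (m + n), g i) ^ (n : ℝ)⁻¹ ≤ (n : ℝ) ^ (-(1 : ℝ) / 2) * x (m + 1) := by
  set d : ℕ → ℝ := fun i => x i ^ 2 - x (i + 1) ^ 2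
  have hd : ∀ i, 0 ≤ d i := fun i => (sq_nonneg _).trans (hgx i)
  have hN : (0 : ℝ) < n := by positivity
  have hcard : #(Icc (m + 1) (m + n)) = n := by simp
  have htelescope : ∑ i ∈ Icc (m + 1) (m + n), d i = x (m + 1) ^ 2 - x (m + n + 1) ^ 2 := by
    have := Finset.sum_Icc_sub (f := fun i => - x i ^ 2) (by omega : m + 1 ≤ m + n)
    simp only [sub_neg_eq_add, neg_add_eq_sub] at this
    rw [← this]
  have hamgm : (∏ i ∈ Icc (m + 1) (m + n), d i) ^ (n : ℝ)⁻¹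
      ≤ (∑ i ∈ Icc (m + 1) (m + n), d i) / n := by
    simpa [hcard] using Real.geom_mean_le_arith_mean (Icc (m + 1) (m + n)) (fun _ => 1) d
      (fun _ _ => zero_le_one) (by simp [Nat.pos_of_ne_zero hn]) (fun i _ => hd i)
  rw [← pow_le_pow_iff_left₀ (Real.rpow_nonneg (prod_nonneg fun i _ => hg i) _)
    (mul_nonneg (by positivity) (hx _)) two_ne_zero]
  calc ((∏ i ∈ Icc (m + 1) (m + n), g i) ^ (n : ℝ)⁻¹) ^ 2
      = (∏ i ∈ Icc (m + 1) (m + n), g i ^ 2) ^ (n : ℝ)⁻¹ := by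
        rw [Real.rpow_pow_comm (prod_nonneg fun i _ => hg i), prod_pow]
    _ ≤ (∏ i ∈ Icc (m + 1) (m + n), d i) ^ (n : ℝ)⁻¹ := by
        gcongr with i
        exact hgx i
    _ ≤ x (m + 1) ^ 2 / n := by
        refine hamgm.trans (div_le_div_of_nonneg_right ?_ hN.le)
        rw [htelescope]
        nlinarith [sq_nonneg (x (m + n + 1))]
    _ = ((n : ℝ) ^ (-(1 : ℝ) / 2) * x (m + 1)) ^ 2 := by
        rw [mul_pow, ← Real.rpow_natCast ((n : ℝ) ^ _), ← Real.rpow_mul hN.le]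
        norm_num [Real.rpow_neg_one]
        ring

lemma prod_rpow_inv_le_of_le_mul_of_sq_le_sub_sq {f g c x : ℕ → ℝ} (hf : ∀ i, 0 ≤ f i)
    (hfg : ∀ i, f i ≤ g i * c i) (hc : ∀ i, 0 ≤ c i) (hg : ∀ i, 0 ≤ g i)
    (hx : ∀ i, 0 ≤ x i) (hgx : ∀ i, g i ^ 2 ≤ x i ^ 2 - x (i + 1) ^ 2) (m : ℕ) {n : ℕ}
    (hn : n ≠ 0) :
    (∏ i ∈ Icc (m + 1) (m + n), f i) ^ (n : ℝ)⁻¹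
      ≤ (n : ℝ) ^ (-(1 : ℝ) / 2) * x (m + 1) * (∏ i ∈ Icc (m + 1) (m + n), c i) ^ (n : ℝ)⁻¹ := by
  have hc' : 0 ≤ ∏ i ∈ Icc (m + 1) (m + n), c i := prod_nonneg fun i _ => hc i
  calc (∏ i ∈ Icc (m + 1) (m + n), f i) ^ (n : ℝ)⁻¹
      ≤ ((∏ i ∈ Icc (m + 1) (m + n), g i) * ∏ i ∈ Icc (m + 1) (m + n), c i) ^ (n : ℝ)⁻¹ := by
        rw [← prod_mul_distrib]
        exact Real.rpow_le_rpow (prod_nonneg fun i _ => hf i)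
          (prod_le_prod (fun i _ => hf i) fun i _ => hfg i) (by positivity)
    _ = (∏ i ∈ Icc (m + 1) (m + n), g i) ^ (n : ℝ)⁻¹
          * (∏ i ∈ Icc (m + 1) (m + n), c i) ^ (n : ℝ)⁻¹ :=
        Real.mul_rpow (prod_nonneg fun i _ => hg i) hc'
    _ ≤ _ := mul_le_mul_of_nonneg_right (prod_rpow_inv_le_of_sq_le_sub_sq hg hx hgx m hn)
          (Real.rpow_nonneg hc' _)

section InnerProductSpace

variable {F : Type*} [NormedAddCommGroup F] [InnerProductSpace ℝ F]

lemma norm_sub_le_norm_sub_of_forall_inner_eq_zero {K : Submodule ℝ F} {u s z : F}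
    (hs : s ∈ K) (horth : ∀ w ∈ K, ⟪u - s, w⟫ = 0) (hz : z ∈ K) : ‖u - s‖ ≤ ‖u - z‖ := by
  have hpyth : ‖u - z‖ ^ 2 = ‖u - s‖ ^ 2 + ‖s - z‖ ^ 2 := by
    rw [← sub_add_sub_cancel u s z, norm_add_sq_real, horth _ (K.sub_mem hs hz)]
    ring
  exact le_of_sq_le_sq (by nlinarith [sq_nonneg ‖s - z‖]) (norm_nonneg _)

lemma sq_inner_le_of_forall_le_norm_sub_smul {x y d : F} (h : ∀ a : ℝ, ‖y‖ ≤ ‖x - a • d‖) :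
    ⟪x, d⟫ ^ 2 ≤ ‖d‖ ^ 2 * (‖x‖ ^ 2 - ‖y‖ ^ 2) := by
  have hdiscr := discrim_le_zero (a := ‖d‖ ^ 2) (b := -2 * ⟪x, d⟫) (c := ‖x‖ ^ 2 - ‖y‖ ^ 2)
    fun a => by
      have hsq := pow_le_pow_left₀ (norm_nonneg y) (h a) 2
      rw [norm_sub_sq_real, inner_smul_right, norm_smul, Real.norm_eq_abs, mul_pow, sq_abs]
        at hsq
      linarith
  rw [discrim] at hdiscr
  linarith

namespace Submodule

variable (K : Submodule ℝ F) [K.HasOrthogonalProjection]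

lemma norm_sub_starProjection_eq_infDist (v : F) :
    ‖v - K.starProjection v‖ = Metric.infDist v K := by
  rw [Metric.infDist_eq_iInf, starProjection_minimal]
  exact iInf_congr fun y => (dist_eq_norm _ _).symm

variable {K}

lemma inner_eq_inner_sub_starProjection_s10 {x : F} (hx : ∀ w ∈ K, ⟪x, w⟫ = 0) (v : F) :
    ⟪v, x⟫ = ⟪v - K.starProjection v, x⟫ := by
  rw [inner_sub_left, real_inner_comm x (K.starProjection v),
    hx _ (K.starProjection_apply_mem v), sub_zero]

lemma abs_inner_le_infDist_mul_norm {x : F} (hx : ∀ w ∈ K, ⟪x, w⟫ = 0) (v : F) :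
    |⟪v, x⟫| ≤ Metric.infDist v K * ‖x‖ := by
  rw [inner_eq_inner_sub_starProjection_s10 hx, ← norm_sub_starProjection_eq_infDist]
  exact abs_real_inner_le_norm _ _

lemma sq_inner_le_infDist_sq_mul_sub {L : Submodule ℝ F} (hKL : K ≤ L) {u s t v : F}
    (hs : s ∈ K) (horth : ∀ w ∈ K, ⟪u - s, w⟫ = 0) (hv : v ∈ L)
    (ht : ∀ z ∈ L, ‖u - t‖ ≤ ‖u - z‖) :
    ⟪v, u - s⟫ ^ 2 ≤ Metric.infDist v K ^ 2 * (‖u - s‖ ^ 2 - ‖u - t‖ ^ 2) := by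
  rw [inner_eq_inner_sub_starProjection_s10 horth, ← norm_sub_starProjection_eq_infDist,
    real_inner_comm]
  refine sq_inner_le_of_forall_le_norm_sub_smul fun a => ?_
  have hmem : s + a • (v - K.starProjection v) ∈ L :=
    L.add_mem (hKL hs) (L.smul_mem a (L.sub_mem hv (hKL (K.starProjection_apply_mem v))))
  simpa only [sub_add_eq_sub_sub] using ht _ hmem

end Submodule

variable [CompleteSpace F] {K : Submodule ℝ F} [K.HasOrthogonalProjection]

lemma apply_eq_zero_of_infDist_toDual_symm_eq_zero {r : F} (hr : ∀ w ∈ K, ⟪r, w⟫ = 0)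
    {ℓ : StrongDual ℝ F} (hℓ : Metric.infDist ((InnerProductSpace.toDual ℝ F).symm ℓ) K = 0) :
    ℓ r = 0 := by
  have h := Submodule.abs_inner_le_infDist_mul_norm hr ((InnerProductSpace.toDual ℝ F).symm ℓ)
  rw [InnerProductSpace.toDual_symm_apply, hℓ, zero_mul] at h
  exact abs_nonpos_iff.mp h

lemma sq_abs_apply_div_infDist_toDual_symm_le {L : Submodule ℝ F} (hKL : K ≤ L) {u s t : F}
    (hs : s ∈ K) (horth : ∀ w ∈ K, ⟪u - s, w⟫ = 0) {ℓ : StrongDual ℝ F}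
    (hℓ : (InnerProductSpace.toDual ℝ F).symm ℓ ∈ L) (ht : ∀ z ∈ L, ‖u - t‖ ≤ ‖u - z‖) :
    (|ℓ (u - s)| / Metric.infDist ((InnerProductSpace.toDual ℝ F).symm ℓ) K) ^ 2
      ≤ ‖u - s‖ ^ 2 - ‖u - t‖ ^ 2 := by
  have h := Submodule.sq_inner_le_infDist_sq_mul_sub hKL hs horth hℓ ht
  rw [InnerProductSpace.toDual_symm_apply] at h
  rw [div_pow, sq_abs]
  exact div_le_of_le_mul₀ (sq_nonneg _)
    (sub_nonneg.mpr (pow_le_pow_left₀ (norm_nonneg _) (ht s (hKL hs)) 2)) (by linarith)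

end InnerProductSpace

theorem pde_beta_greedy_product_bound_large_beta_general {H : Type*} [NormedAddCommGroup H]
    [InnerProductSpace ℝ H] [CompleteSpace H]
    (Λ : Set (StrongDual ℝ H)) (u : H)
    (lam : ℕ → StrongDual ℝ H)
    (V : ℕ → Submodule ℝ H)
    (hV : ∀ n, V n = Submodule.span ℝ
      ((fun j => (InnerProductSpace.toDual ℝ H).symm (lam j)) '' Set.Icc 1 n))
    (s : ℕ → H)
    (hs : ∀ n, s n ∈ V n ∧ ∀ w ∈ V n, ⟪u - s n, w⟫ = 0)
    (P : ℕ → StrongDual ℝ H → ℝ)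
    (hP : ∀ n l, P n l = Metric.infDist ((InnerProductSpace.toDual ℝ H).symm l)
      (V n : Set H))
    (β : ℝ) (hβ : 1 < β)
    (hgreedy : ∀ i, ∀ l ∈ Λ, |l (u - s i)| ^ β * P i l ^ (1 - β)
      ≤ |lam (i + 1) (u - s i)| ^ β * P i (lam (i + 1)) ^ (1 - β))
    (hPle1 : ∀ i, ∀ l ∈ Λ, P i l ≤ 1)
    (n : ℕ) (hn : 1 ≤ n) :
    (∏ i ∈ Finset.Icc (n + 1) (2 * n),
        ⨆ l : Λ, |(l : StrongDual ℝ H) (u - s i)|) ^ ((n : ℝ)⁻¹)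
      ≤ (n : ℝ) ^ (-(1 : ℝ) / 2) * ‖u - s (n + 1)‖ *
        (∏ i ∈ Finset.Icc (n + 1) (2 * n), P i (lam (i + 1)) ^ (1 / β)) ^ ((n : ℝ)⁻¹) := by
  have hfd : ∀ m, FiniteDimensional ℝ (V m) := fun m => by
    rw [hV m]
    exact FiniteDimensional.span_of_finite ℝ ((Set.finite_Icc 1 m).image _)
  have hmono : ∀ m, V m ≤ V (m + 1) := fun m => by
    rw [hV m, hV (m + 1)]
    exact Submodule.span_mono (Set.image_mono (Set.Icc_subset_Icc_right m.le_succ))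
  have hnew : ∀ m, (InnerProductSpace.toDual ℝ H).symm (lam (m + 1)) ∈ V (m + 1) := fun m => by
    rw [hV]
    exact Submodule.subset_span ⟨m + 1, ⟨by omega, le_rfl⟩, rfl⟩
  have hmin : ∀ m, ∀ z ∈ V m, ‖u - s m‖ ≤ ‖u - z‖ := fun m _ hz =>
    norm_sub_le_norm_sub_of_forall_inner_eq_zero (hs m).1 (hs m).2 hz
  have hPnonneg : ∀ i l, 0 ≤ P i l := fun i l => hP i l ▸ Metric.infDist_nonneg
  have hsup : ∀ i, ⨆ l : Λ, |(l : StrongDual ℝ H) (u - s i)|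
      ≤ |lam (i + 1) (u - s i)| / P i (lam (i + 1)) * P i (lam (i + 1)) ^ (1 / β) := fun i =>
    iSup_abs_le_div_mul_rpow_of_greedy hβ (hPnonneg i) (hPle1 i)
      (fun l hl => apply_eq_zero_of_infDist_toDual_symm_eq_zero (hs i).2 (hP i l ▸ hl))
      (hgreedy i)
  have henergy : ∀ i, (|lam (i + 1) (u - s i)| / P i (lam (i + 1))) ^ 2
      ≤ ‖u - s i‖ ^ 2 - ‖u - s (i + 1)‖ ^ 2 := fun i => by
    rw [hP]
    exact sq_abs_apply_div_infDist_toDual_symm_le (hmono i) (hs i).1 (hs i).2 (hnew i)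
      (hmin (i + 1))
  rw [two_mul]
  exact prod_rpow_inv_le_of_le_mul_of_sq_le_sub_sq
    (fun i => Real.iSup_nonneg fun _ => abs_nonneg _) hsup
    (fun i => Real.rpow_nonneg (hPnonneg i _) _) (fun i => div_nonneg (abs_nonneg _) (hPnonneg i _))
    (fun _ => norm_nonneg _) henergy n (by omega)

/-- Convergence estimate for PDE-β-greedy algorithms with `β ∈ (1,∞)` under the
normalization `sup_{λ∈Λ} P_i(λ) ≤ 1`:
`[∏_{i=n+1}^{2n} sup_{λ∈Λ}|λ(r_i)|]^{1/n} ≤ n^{-1/2} ‖r_{n+1}‖ [∏_{i=n+1}^{2n} P_i(λ_{i+1})^{1/β}]^{1/n}`. -/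
theorem pde_beta_greedy_product_bound_large_beta {H : Type*} [NormedAddCommGroup H]
    [InnerProductSpace ℝ H] [CompleteSpace H]
    (Λ : Set (StrongDual ℝ H)) (u : H)
    (lam : ℕ → StrongDual ℝ H) (hmem : ∀ i, lam i ∈ Λ)
    (V : ℕ → Submodule ℝ H)
    (hV : ∀ n, V n = Submodule.span ℝ
      ((fun j => (InnerProductSpace.toDual ℝ H).symm (lam j)) '' Set.Icc 1 n))
    (s : ℕ → H)
    (hs : ∀ n, s n ∈ V n ∧ ∀ w ∈ V n, ⟪u - s n, w⟫ = 0)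
    (P : ℕ → StrongDual ℝ H → ℝ)
    (hP : ∀ n l, P n l = Metric.infDist ((InnerProductSpace.toDual ℝ H).symm l)
      (V n : Set H))
    (β : ℝ) (hβ : 1 < β)
    (hgreedy : ∀ i, ∀ l ∈ Λ, |l (u - s i)| ^ β * P i l ^ (1 - β)
      ≤ |lam (i + 1) (u - s i)| ^ β * P i (lam (i + 1)) ^ (1 - β))
    (hattain : ∀ i, ∃ l₀ ∈ Λ, ∀ l ∈ Λ, |l (u - s i)| ≤ |l₀ (u - s i)|)
    (hPle1 : ∀ i, ∀ l ∈ Λ, P i l ≤ 1)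
    (n : ℕ) (hn : 1 ≤ n)
    (hPne : ∀ i ∈ Finset.Icc (n + 1) (2 * n), P i (lam (i + 1)) ≠ 0) :
    (∏ i ∈ Finset.Icc (n + 1) (2 * n),
        ⨆ l : Λ, |(l : StrongDual ℝ H) (u - s i)|) ^ ((n : ℝ)⁻¹)
      ≤ (n : ℝ) ^ (-(1 : ℝ) / 2) * ‖u - s (n + 1)‖ *
        (∏ i ∈ Finset.Icc (n + 1) (2 * n), P i (lam (i + 1)) ^ (1 / β)) ^ ((n : ℝ)⁻¹) :=
  pde_beta_greedy_product_bound_large_beta_general Λ u lam V hV s hs P hP β hβ hgreedy hPle1 n hn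
end

section
/- Let $\mathcal{H}$ be a Hilbert space, $\mathcal{F} \subset \mathcal{H}$ compact with $\|f\| \leq 1$ for all $f \in \mathcal{F}$, and $(f_n)_{n\geq 0} \subset \mathcal{F}$ any sequence with $V_n = \mathrm{span}\{f_0,\dots,f_{n-1}\}$ and $\nu_n = \mathrm{dist}(f_n, V_n)$. Suppose $d_n(\mathcal{F}) \leq C_0 e^{-c_0 n^\alpha}$ for all $n \geq 1$ with $C_0, c_0, \alpha > 0$. Then for all $n \geq 2$: $\left( \prod_{i=n+1}^{2n} \nu_i \right)^{1/n} \leq \sqrt{2 \max\{1, C_0\}} \cdot e^{-c_1 n^\alpha}$ with $c_1 = 2^{-(2+\alpha)} c_0$. -/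
/-!
The product of the distances `dist(gᵢ, span{g₀, …, gᵢ₋₁})` of `K` vectors is the square root of
their Gram determinant; for a block `gⱼ = f_{N+j}` of the sequence it only decreases when the spaces
`Vᵢ` are used instead. If an `m`-dimensional space `U` approximates every `gⱼ` within `δ`, split the
Gram matrix as `gram (P_U g) + gram (g - P_U g)`. In an eigenbasis of the first summand, whose rank
is at most `m`, Hadamard's inequality bounds the determinant by a product of `K` diagonal entries
with sum at most `K`, of which at least `K - m` see only the second summand and have sum at most
`K δ²`; AM-GM then gives `det ≤ 2^K δ^(2(K-m))`. Taking `K = n`, `m = ⌈n/2⌉` and `δ → d_m(F)`, the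
`n`-th root is `√2 · d_m(F)^((n-m)/n)`, and `(n - m)/n ∈ [1/3, 1/2]` turns `C₀ e^(-c₀ m^α)` into
the claimed bound.
-/

/-- Kolmogorov `n`-width (real-valued) of a set `F` in a Hilbert space. -/
noncomputable def dnWidth {H : Type*} [NormedAddCommGroup H] [InnerProductSpace ℝ H]
    (n : ℕ) (F : Set H) : ℝ :=
  ⨅ G : {G : Submodule ℝ H // FiniteDimensional ℝ G ∧ Module.finrank ℝ G ≤ n},
    ⨆ f : F, Metric.infDist (f : H) ((G : Submodule ℝ H) : Set H)

open Finset Matrix Real Filter Topology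

theorem Real.prod_le_sum_div_card_pow {ι : Type*} (s : Finset ι) {z : ι → ℝ}
    (hz : ∀ i ∈ s, 0 ≤ z i) : ∏ i ∈ s, z i ≤ ((∑ i ∈ s, z i) / #s) ^ #s := by
  rcases s.eq_empty_or_nonempty with rfl | hs
  · simp
  have hcard : (0 : ℝ) < #s := by exact_mod_cast hs.card_pos
  have amgm := geom_mean_le_arith_mean s (fun _ => 1) z (fun _ _ => zero_le_one)
    (by simpa using hcard) hz
  simp only [rpow_one, sum_const, nsmul_eq_mul, mul_one, one_mul] at amgm
  have hprod : 0 ≤ ∏ i ∈ s, z i := prod_nonneg hz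
  calc ∏ i ∈ s, z i = ((∏ i ∈ s, z i) ^ ((#s : ℝ)⁻¹)) ^ #s := by
        rw [← rpow_natCast, ← rpow_mul hprod, inv_mul_cancel₀ hcard.ne', rpow_one]
    _ ≤ ((∑ i ∈ s, z i) / #s) ^ #s := by gcongr

theorem prod_le_two_pow_mul_pow_of_sum_le {ι : Type*} [Fintype ι] [DecidableEq ι] {a : ι → ℝ}
    (ha : ∀ i, 0 ≤ a i) (Z : Finset ι) {δ : ℝ} (hδ : 0 < δ)
    (hsum : ∑ i, a i ≤ Fintype.card ι) (hZ : ∑ i ∈ Z, a i ≤ Fintype.card ι * δ ^ 2) :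
    ∏ i, a i ≤ 2 ^ Fintype.card ι * δ ^ (2 * #Z) := by
  -- rescaling the coordinates in `Z` by `δ⁻²` makes both partial sums at most `card ι`
  set d : ι → ℝ := fun i => if i ∈ Z then δ ^ 2 else 1
  have hd : ∀ i, 0 < d i := fun i => by dsimp only [d]; split_ifs <;> positivity
  have hprod : ∏ i, a i / d i = (∏ i, a i) / δ ^ (2 * #Z) := by
    rw [prod_div_distrib, prod_ite_mem, univ_inter, prod_const, pow_mul]
  have hsum_le : ∑ i, a i / d i ≤ 2 * Fintype.card ι := by
    have hZ' : ∑ i, (if i ∈ Z then a i / δ ^ 2 else 0) ≤ Fintype.card ι := by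
      rw [sum_ite_mem, univ_inter, ← sum_div, div_le_iff₀ (by positivity)]
      exact hZ
    calc ∑ i, a i / d i ≤ ∑ i, (a i + if i ∈ Z then a i / δ ^ 2 else 0) := by
          gcongr with i
          dsimp only [d]
          split_ifs
          · linarith [ha i]
          · simp
      _ ≤ 2 * Fintype.card ι := by rw [sum_add_distrib]; linarith
  have hmean : (∑ i, a i / d i) / Fintype.card ι ≤ 2 :=
    div_le_of_le_mul₀ (Nat.cast_nonneg _) zero_le_two hsum_le
  have key := (Real.prod_le_sum_div_card_pow univ fun i _ => div_nonneg (ha i) (hd i).le).trans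
    (pow_le_pow_left₀ (div_nonneg (sum_nonneg fun i _ => div_nonneg (ha i) (hd i).le)
      (Nat.cast_nonneg _)) hmean _)
  rw [hprod, card_univ, div_le_iff₀ (by positivity)] at key
  exact key

section

variable {H : Type*} [NormedAddCommGroup H] [InnerProductSpace ℝ H]

theorem Submodule.infDist_le_norm (W : Submodule ℝ H) (x : H) : Metric.infDist x W ≤ ‖x‖ := by
  simpa using Metric.infDist_le_dist_of_mem (x := x) W.zero_mem

theorem Submodule.infDist_eq_norm_sub_starProjection_s12 (W : Submodule ℝ H)
    [W.HasOrthogonalProjection] (x : H) :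
    Metric.infDist x W = ‖x - W.starProjection x‖ := by
  rw [Metric.infDist_eq_iInf, Submodule.starProjection_minimal]
  exact iInf_congr fun y => dist_eq_norm _ _

theorem Matrix.gram_sum_smul {n n' : Type*} [Fintype n] (v : n → H) (Q : Matrix n n' ℝ) :
    gram ℝ (fun j => ∑ i, Q i j • v i) = Qᵀ * gram ℝ v * Q := by
  ext j k
  simp only [gram_apply, sum_inner, inner_sum, real_inner_smul_left, real_inner_smul_right,
    mul_apply, transpose_apply, Finset.sum_mul]
  exact Finset.sum_congr rfl fun _ _ => Finset.sum_congr rfl fun _ _ => by ring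

theorem Matrix.trace_gram {n : Type*} [Fintype n] (v : n → H) :
    (gram ℝ v).trace = ∑ i, ‖v i‖ ^ 2 := by
  simp [trace]

theorem Matrix.rank_gram_le_finrank {E : Type*} [NormedAddCommGroup E] [InnerProductSpace ℝ E]
    [FiniteDimensional ℝ E] {n : Type*} [Fintype n] (v : n → E) :
    (gram ℝ v).rank ≤ Module.finrank ℝ E := by
  rw [gram_eq_conjTranspose_mul (stdOrthonormalBasis ℝ E) v]
  exact (rank_mul_le_right _ _).trans ((rank_le_card_height _).trans (by simp))

theorem Matrix.det_gram_fin_succ {k : ℕ} (v : Fin (k + 1) → H) :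
    (gram ℝ v).det = Metric.infDist (v (Fin.last k))
      (Submodule.span ℝ (Set.range (v ∘ Fin.castSucc))) ^ 2 * (gram ℝ (v ∘ Fin.castSucc)).det := by
  set W := Submodule.span ℝ (Set.range (v ∘ Fin.castSucc))
  have : FiniteDimensional ℝ W := FiniteDimensional.span_of_finite ℝ (Set.finite_range _)
  set p := W.starProjection (v (Fin.last k))
  set q := v (Fin.last k) - p
  have hq : ∀ w ∈ W, inner ℝ w q = 0 := fun w hw =>
    (Submodule.mem_orthogonal W q).mp (W.sub_starProjection_mem_orthogonal _) w hw
  -- the last column of the Gram matrix splits into a combination of the other columns, coming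
  -- from the projection `p` of the last vector, and a column supported on the diagonal
  obtain ⟨c, hc⟩ :=
    (Submodule.mem_span_range_iff_exists_fun ℝ).mp (W.starProjection_apply_mem (v (Fin.last k)))
  have hp_col : (fun i => inner ℝ (v i) p)
      = fun i => ∑ j, (Fin.snoc c 0 : Fin (k + 1) → ℝ) j • gram ℝ v i j := by
    funext i
    simp [Fin.sum_univ_castSucc, p, ← hc, inner_sum, real_inner_smul_right, mul_comm]
  have hq_col : (fun i => inner ℝ (v i) q) = Pi.single (Fin.last k) (‖q‖ ^ 2) := by
    funext i
    induction i using Fin.lastCases with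
    | last =>
      rw [Pi.single_eq_same, ← real_inner_self_eq_norm_sq, show v (Fin.last k) = p + q by simp [q],
        inner_add_left, hq p (W.starProjection_apply_mem _), zero_add]
    | cast j =>
      rw [Pi.single_eq_of_ne (Fin.castSucc_lt_last j).ne]
      exact hq _ (Submodule.subset_span ⟨j, rfl⟩)
  have hsplit : (gram ℝ v).det = ((gram ℝ v).updateCol (Fin.last k) fun i => inner ℝ (v i) p).det
      + ((gram ℝ v).updateCol (Fin.last k) fun i => inner ℝ (v i) q).det := by
    have hcol : (fun i => gram ℝ v i (Fin.last k))
        = (fun i => inner ℝ (v i) p) + fun i => inner ℝ (v i) q := by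
      funext i
      simp [q, ← inner_add_right]
    rw [← det_updateCol_add, ← hcol, updateCol_eq_self]
  have hdet_p : ((gram ℝ v).updateCol (Fin.last k) fun i => inner ℝ (v i) p).det = 0 := by
    rw [hp_col, det_updateCol_sum, Fin.snoc_last, zero_smul]
  have hdet_q : ((gram ℝ v).updateCol (Fin.last k) fun i => inner ℝ (v i) q).det
      = ‖q‖ ^ 2 * (gram ℝ (v ∘ Fin.castSucc)).det := by
    rw [hq_col, det_succ_column _ (Fin.last k), Fintype.sum_eq_single (Fin.last k)]
    · simp [Fin.succAbove_last, submatrix]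
      exact .inl rfl
    · intro i hi
      rw [updateCol_self, Pi.single_eq_of_ne hi, mul_zero, zero_mul]
  rw [hsplit, hdet_p, hdet_q, zero_add, W.infDist_eq_norm_sub_starProjection_s12]

theorem Matrix.det_gram_eq_prod_infDist_sq {k : ℕ} (v : Fin k → H) :
    (gram ℝ v).det = ∏ i, Metric.infDist (v i) (Submodule.span ℝ (v '' Set.Iio i)) ^ 2 := by
  induction k with
  | zero => simp
  | succ k ih =>
    have hlast : Set.range (v ∘ Fin.castSucc) = v '' Set.Iio (Fin.last k) := by
      rw [Set.range_comp]
      congr 1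
      ext i
      induction i using Fin.lastCases <;> simp [Fin.castSucc_lt_last]
    have hcast (j : Fin k) : (v ∘ Fin.castSucc) '' Set.Iio j = v '' Set.Iio j.castSucc := by
      rw [Set.image_comp]
      congr 1
      ext i
      induction i using Fin.lastCases <;> simp
    rw [det_gram_fin_succ, ih, Fin.prod_univ_castSucc, hlast, mul_comm]
    simp only [hcast]
    rfl

theorem Matrix.det_gram_le_prod_norm_sq {n : Type*} [Fintype n] [DecidableEq n] (v : n → H) :
    (gram ℝ v).det ≤ ∏ i, ‖v i‖ ^ 2 := by
  let e := Fintype.equivFin n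
  calc (gram ℝ v).det = (gram ℝ (v ∘ e.symm)).det := (det_submatrix_equiv_self e.symm _).symm
    _ ≤ ∏ i, ‖v (e.symm i)‖ ^ 2 := by
      rw [det_gram_eq_prod_infDist_sq]
      gcongr with i
      · exact Metric.infDist_nonneg
      · exact Submodule.infDist_le_norm _ _
    _ = ∏ i, ‖v i‖ ^ 2 := e.symm.prod_comp fun i => ‖v i‖ ^ 2

theorem Matrix.det_gram_le_prod_diag_transpose_mul_mul {n : Type*} [Fintype n] [DecidableEq n]
    (v : n → H) {Q : Matrix n n ℝ} (hQ : Qᵀ * Q = 1) :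
    (gram ℝ v).det ≤ ∏ s, (Qᵀ * gram ℝ v * Q) s s := by
  have hdet : (Qᵀ * gram ℝ v * Q).det = (gram ℝ v).det := by
    have := congrArg det hQ
    rw [det_mul, det_one] at this
    rw [det_mul, det_mul]
    linear_combination (gram ℝ v).det * this
  rw [← hdet, ← gram_sum_smul]
  refine (det_gram_le_prod_norm_sq _).trans_eq ?_
  simp

theorem Matrix.det_gram_le_of_eq_add {n : Type*} [Fintype n] [DecidableEq n] (v : n → H)
    {B C : Matrix n n ℝ} (hB : B.IsHermitian) (hC : C.PosSemidef) (hv : gram ℝ v = B + C)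
    {δ : ℝ} (hδ : 0 < δ) (hvtr : (gram ℝ v).trace ≤ Fintype.card n)
    (hCtr : C.trace ≤ Fintype.card n * δ ^ 2) :
    (gram ℝ v).det ≤ 2 ^ Fintype.card n * δ ^ (2 * (Fintype.card n - B.rank)) := by
  -- in an eigenbasis of `B`, Hadamard's inequality splits into the kernel of `B`, where only `C`
  -- contributes, and at most `rank B` further directions
  set Q : Matrix n n ℝ := ↑hB.eigenvectorUnitary
  have hQQ : Qᵀ * Q = 1 := by
    simpa [star_eq_conjTranspose] using Unitary.coe_star_mul_self hB.eigenvectorUnitary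
  have hQQ' : Q * Qᵀ = 1 := by
    simpa [star_eq_conjTranspose] using Unitary.coe_mul_star_self hB.eigenvectorUnitary
  have hdiagB : Qᵀ * B * Q = diagonal hB.eigenvalues := by
    simpa [Unitary.conjStarAlgAut_apply, star_eq_conjTranspose] using
      hB.conjStarAlgAut_star_eigenvectorUnitary
  have htrace (M : Matrix n n ℝ) : (Qᵀ * M * Q).trace = M.trace := by
    rw [trace_mul_cycle, hQQ', one_mul]
  have hC' : (Qᵀ * C * Q).PosSemidef := by
    simpa [conjTranspose_eq_transpose_of_trivial] using hC.conjTranspose_mul_mul_same Q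
  set a : n → ℝ := fun s => (Qᵀ * gram ℝ v * Q) s s
  set Z : Finset n := univ.filter fun s => hB.eigenvalues s = 0
  have ha : ∀ s, 0 ≤ a s := fun s => by
    simpa [conjTranspose_eq_transpose_of_trivial] using
      ((posSemidef_gram ℝ v).conjTranspose_mul_mul_same Q).diag_nonneg (i := s)
  have haZ : ∀ s ∈ Z, a s = (Qᵀ * C * Q) s s := fun s hs => by
    simp only [a, hv, mul_add, add_mul, add_apply, hdiagB, diagonal_apply_eq,
      (mem_filter.mp hs).2, zero_add]
  have hsum : ∑ s, a s ≤ Fintype.card n := by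
    rwa [← htrace] at hvtr
  have hZ : ∑ s ∈ Z, a s ≤ Fintype.card n * δ ^ 2 := calc
    ∑ s ∈ Z, a s = ∑ s ∈ Z, (Qᵀ * C * Q) s s := sum_congr rfl haZ
    _ ≤ (Qᵀ * C * Q).trace := sum_le_univ_sum_of_nonneg fun s => hC'.diag_nonneg
    _ ≤ Fintype.card n * δ ^ 2 := by rwa [htrace]
  have hZcard : #Z = Fintype.card n - B.rank := by
    have : #Z + #(univ.filter fun s => hB.eigenvalues s ≠ 0) = Fintype.card n :=
      card_filter_add_card_filter_not _
    rw [hB.rank_eq_card_non_zero_eigs, Fintype.card_subtype]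
    omega
  calc (gram ℝ v).det ≤ ∏ s, a s := det_gram_le_prod_diag_transpose_mul_mul v hQQ
    _ ≤ 2 ^ Fintype.card n * δ ^ (2 * #Z) := prod_le_two_pow_mul_pow_of_sum_le ha Z hδ hsum hZ
    _ = 2 ^ Fintype.card n * δ ^ (2 * (Fintype.card n - B.rank)) := by rw [hZcard]

theorem prod_infDist_sq_le_of_infDist_le {K m : ℕ} (g : Fin K → H) (hg : ∀ i, ‖g i‖ ≤ 1)
    (U : Submodule ℝ H) [FiniteDimensional ℝ U] (hU : Module.finrank ℝ U ≤ m)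
    {δ : ℝ} (hδ0 : 0 < δ) (hδ1 : δ ≤ 1) (hgU : ∀ i, Metric.infDist (g i) U ≤ δ) :
    ∏ i, Metric.infDist (g i) (Submodule.span ℝ (g '' Set.Iio i)) ^ 2
      ≤ 2 ^ K * δ ^ (2 * (K - m)) := by
  set b : Fin K → U := fun i => U.orthogonalProjectionOnto (g i)
  set c : Fin K → H := fun i => g i - U.starProjection (g i)
  have hbc : ∀ i j, inner ℝ (b i : H) (c j) = 0 := fun i j =>
    Submodule.inner_right_of_mem_orthogonal (b i).2 (U.sub_starProjection_mem_orthogonal _)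
  have hgram : gram ℝ g = gram ℝ b + gram ℝ c := by
    ext i j
    have hdecomp : ∀ i, g i = b i + c i := fun i => by simp [b, c]
    have hcb : ∀ i j, inner ℝ (c i) (b j : H) = 0 := fun i j => by rw [real_inner_comm, hbc]
    simp only [Matrix.add_apply, gram_apply, hdecomp, inner_add_left, inner_add_right, hbc, hcb,
      Submodule.coe_inner]
    ring
  have hgtr : (gram ℝ g).trace ≤ Fintype.card (Fin K) := by
    rw [trace_gram, Fintype.card_fin]
    exact (sum_le_sum fun i _ => pow_le_one₀ (norm_nonneg _) (hg i)).trans_eq (by simp)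
  have hctr : (gram ℝ c).trace ≤ Fintype.card (Fin K) * δ ^ 2 := by
    rw [trace_gram, Fintype.card_fin]
    have hc : ∀ i, ‖c i‖ ≤ δ := fun i =>
      (U.infDist_eq_norm_sub_starProjection_s12 (g i)).symm.trans_le (hgU i)
    exact (sum_le_sum fun i _ => pow_le_pow_left₀ (norm_nonneg _) (hc i) 2).trans_eq (by simp)
  rw [← det_gram_eq_prod_infDist_sq]
  calc (gram ℝ g).det ≤ 2 ^ K * δ ^ (2 * (K - (gram ℝ b).rank)) := by
        simpa using det_gram_le_of_eq_add g (isHermitian_gram ℝ b) (posSemidef_gram ℝ c) hgram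
          hδ0 hgtr hctr
    _ ≤ 2 ^ K * δ ^ (2 * (K - m)) := by
      have := (rank_gram_le_finrank b).trans hU
      exact mul_le_mul_of_nonneg_left (pow_le_pow_of_le_one hδ0.le hδ1 (by omega)) (by positivity)

theorem prod_infDist_sq_le_of_dnWidth_le {K m : ℕ} {F : Set H} (hF : ∀ f ∈ F, ‖f‖ ≤ 1)
    (g : Fin K → H) (hg : ∀ i, g i ∈ F) {ε : ℝ} (hε : dnWidth m F ≤ ε) :
    ∏ i, Metric.infDist (g i) (Submodule.span ℝ (g '' Set.Iio i)) ^ 2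
      ≤ 2 ^ K * min 1 ε ^ (2 * (K - m)) := by
  -- `dnWidth` need not be attained, so we approximate it from above
  have happrox : ∀ η > ε, ∏ i, Metric.infDist (g i) (Submodule.span ℝ (g '' Set.Iio i)) ^ 2
      ≤ 2 ^ K * min 1 η ^ (2 * (K - m)) := by
    intro η hη
    have : Nonempty {G : Submodule ℝ H // FiniteDimensional ℝ G ∧ Module.finrank ℝ G ≤ m} :=
      ⟨⟨⊥, inferInstance, by simp⟩⟩
    obtain ⟨⟨G, hGfin, hGrank⟩, hG⟩ := exists_lt_of_ciInf_lt (hε.trans_lt hη)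
    have hbdd : BddAbove (Set.range fun f : F => Metric.infDist (f : H) G) :=
      ⟨1, Set.forall_mem_range.mpr fun f => (G.infDist_le_norm f).trans (hF f f.2)⟩
    have hgG (i : Fin K) : Metric.infDist (g i) G < η :=
      (le_ciSup hbdd ⟨g i, hg i⟩).trans_lt hG
    have hη0 : 0 < η := (Real.iSup_nonneg fun _ => Metric.infDist_nonneg).trans_lt hG
    exact prod_infDist_sq_le_of_infDist_le g (fun i => hF _ (hg i)) G hGrank
      (lt_min one_pos hη0) (min_le_left _ _)
      fun i => le_min ((G.infDist_le_norm _).trans (hF _ (hg i))) (hgG i).le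
  have hcont : Continuous fun η : ℝ => 2 ^ K * min 1 η ^ (2 * (K - m)) := by fun_prop
  exact ge_of_tendsto ((hcont.tendsto ε).mono_left nhdsWithin_le_nhds)
    (eventually_nhdsWithin_of_forall (s := Set.Ioi ε) happrox)

theorem prod_Ico_infDist_span_sq_le_of_dnWidth_le {F : Set H} (hF : ∀ f ∈ F, ‖f‖ ≤ 1)
    (f : ℕ → H) (hf : ∀ n, f n ∈ F) (N K m : ℕ) {ε : ℝ} (hε : dnWidth m F ≤ ε) :
    (∏ i ∈ Ico N (N + K), Metric.infDist (f i) (Submodule.span ℝ (f '' Set.Iio i))) ^ 2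
      ≤ 2 ^ K * min 1 ε ^ (2 * (K - m)) := by
  set g : Fin K → H := fun j => f (N + j)
  have hmono (j : Fin K) : Metric.infDist (f (N + j)) (Submodule.span ℝ (f '' Set.Iio (N + j)))
      ≤ Metric.infDist (g j) (Submodule.span ℝ (g '' Set.Iio j)) := by
    refine Metric.infDist_le_infDist_of_subset (Submodule.span_mono ?_) ⟨0, Submodule.zero_mem _⟩
    rintro _ ⟨i, hi, rfl⟩
    exact ⟨N + i, by simpa using hi, rfl⟩
  rw [prod_Ico_eq_prod_range, Nat.add_sub_cancel_left, ← Fin.prod_univ_eq_prod_range, ← prod_pow]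
  refine le_trans ?_ (prod_infDist_sq_le_of_dnWidth_le hF g (fun j => hf _) hε)
  gcongr with j
  · exact Metric.infDist_nonneg
  · exact hmono j

end

theorem rpow_exp_decay_half_index_le {C₀ c₀ α : ℝ} (hC₀ : 0 ≤ C₀) (hc₀ : 0 ≤ c₀) (hα : 0 ≤ α)
    {n : ℕ} (hn : 2 ≤ n) :
    (C₀ * exp (-c₀ * (((n + 1) / 2 : ℕ) : ℝ) ^ α)) ^ (((n - (n + 1) / 2 : ℕ) : ℝ) / n)
      ≤ √(max 1 C₀) * exp (-(2 ^ (-(2 + α)) * c₀) * (n : ℝ) ^ α) := by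
  set m := (n + 1) / 2
  set θ : ℝ := ((n - m : ℕ) : ℝ) / n
  have hnpos : (0 : ℝ) < n := by positivity
  have hθ3 : 1 / 3 ≤ θ := by
    rw [le_div_iff₀ hnpos]
    have : n ≤ 3 * (n - m) := by omega
    have : (n : ℝ) ≤ 3 * ((n - m : ℕ) : ℝ) := by exact_mod_cast this
    linarith
  have hθ2 : θ ≤ 1 / 2 := by
    rw [div_le_iff₀ hnpos]
    have : 2 * (n - m) ≤ n := by omega
    have : 2 * ((n - m : ℕ) : ℝ) ≤ n := by exact_mod_cast this
    linarith
  have hθ0 : 0 ≤ θ := by positivity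
  have hhalf : ((n : ℝ) / 2) ^ α ≤ (m : ℝ) ^ α := by
    refine rpow_le_rpow (by positivity) ?_ hα
    have : n ≤ 2 * m := by omega
    have : (n : ℝ) ≤ 2 * m := by exact_mod_cast this
    linarith
  have hc₁ : 2 ^ (-(2 + α)) * (n : ℝ) ^ α = ((n : ℝ) / 2) ^ α / 4 := by
    rw [div_rpow hnpos.le zero_le_two, neg_add, rpow_add two_pos, rpow_neg zero_le_two,
      rpow_neg zero_le_two, rpow_two]
    ring
  have hexp : -c₀ * (m : ℝ) ^ α * θ ≤ -(2 ^ (-(2 + α)) * c₀) * (n : ℝ) ^ α := by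
    have : ((n : ℝ) / 2) ^ α / 4 ≤ (m : ℝ) ^ α * θ := calc
      _ ≤ (m : ℝ) ^ α * (1 / 3) := by linarith [rpow_nonneg (by positivity : (0 : ℝ) ≤ n / 2) α]
      _ ≤ (m : ℝ) ^ α * θ := mul_le_mul_of_nonneg_left hθ3 (by positivity)
    have := mul_le_mul_of_nonneg_left this hc₀
    rw [← hc₁] at this
    linarith
  have hC : C₀ ^ θ ≤ √(max 1 C₀) := by
    rw [sqrt_eq_rpow]
    calc C₀ ^ θ ≤ max 1 C₀ ^ θ := rpow_le_rpow hC₀ (le_max_right _ _) hθ0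
      _ ≤ max 1 C₀ ^ (1 / 2 : ℝ) := rpow_le_rpow_of_exponent_le (le_max_left _ _) hθ2
  rw [mul_rpow hC₀ (exp_pos _).le, ← exp_mul]
  exact mul_le_mul hC (exp_le_exp.mpr hexp) (exp_pos _).le (sqrt_nonneg _)

theorem greedy_geometric_mean_decay_exponential_general {H : Type*} [NormedAddCommGroup H]
    [InnerProductSpace ℝ H]
    (F : Set H) (hF1 : ∀ f ∈ F, ‖f‖ ≤ 1)
    (f : ℕ → H) (hf : ∀ n, f n ∈ F)
    (ν : ℕ → ℝ)
    (hν : ∀ n, ν n = Metric.infDist (f n)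
      ((Submodule.span ℝ (f '' Set.Iio n) : Submodule ℝ H) : Set H))
    (C₀ c₀ α : ℝ) (hC₀ : 0 < C₀) (hc₀ : 0 < c₀) (hα : 0 < α)
    (hd : ∀ n : ℕ, 1 ≤ n → dnWidth n F ≤ C₀ * Real.exp (-c₀ * (n : ℝ) ^ α))
    (n : ℕ) (hn : 2 ≤ n) :
    (∏ i ∈ Finset.Icc (n + 1) (2 * n), ν i) ^ ((n : ℝ)⁻¹)
      ≤ Real.sqrt (2 * max 1 C₀) *
        Real.exp (-((2 : ℝ) ^ (-(2 + α)) * c₀) * (n : ℝ) ^ α) := by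
  set m := (n + 1) / 2
  set ε := C₀ * exp (-c₀ * (m : ℝ) ^ α)
  have hε : 0 ≤ ε := by positivity
  have hP : 0 ≤ ∏ i ∈ Icc (n + 1) (2 * n), ν i :=
    prod_nonneg fun i _ => (hν i).symm ▸ Metric.infDist_nonneg
  have hprod : ∏ i ∈ Icc (n + 1) (2 * n), ν i ≤ √2 ^ n * ε ^ (n - m) := by
    have h := prod_Ico_infDist_span_sq_le_of_dnWidth_le hF1 f hf (n + 1) n m (hd m (by omega))
    rw [show n + 1 + n = 2 * n + 1 by ring, Ico_add_one_right_eq_Icc,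
      ← prod_congr rfl fun i _ => hν i] at h
    rw [← pow_le_pow_iff_left₀ hP (by positivity) two_ne_zero]
    calc _ ≤ 2 ^ n * min 1 ε ^ (2 * (n - m)) := h
      _ ≤ (√2 ^ n * ε ^ (n - m)) ^ 2 := by
        rw [mul_pow, ← pow_mul, ← pow_mul, mul_comm n 2, pow_mul √2 2 n, sq_sqrt zero_le_two,
          mul_comm (n - m) 2]
        gcongr
        exact min_le_right _ _
  calc (∏ i ∈ Icc (n + 1) (2 * n), ν i) ^ (n : ℝ)⁻¹ ≤ (√2 ^ n * ε ^ (n - m)) ^ (n : ℝ)⁻¹ := by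
        gcongr
    _ = √2 * ε ^ (((n - m : ℕ) : ℝ) / n) := by
        rw [mul_rpow (by positivity) (by positivity), pow_rpow_inv_natCast (sqrt_nonneg _)
          (by omega), ← rpow_natCast, ← rpow_mul hε, div_eq_mul_inv]
    _ ≤ √2 * (√(max 1 C₀) * exp (-(2 ^ (-(2 + α)) * c₀) * (n : ℝ) ^ α)) := by
        gcongr
        exact rpow_exp_decay_half_index_le hC₀.le hc₀.le hα.le hn
    _ = √(2 * max 1 C₀) * exp (-(2 ^ (-(2 + α)) * c₀) * (n : ℝ) ^ α) := by
        rw [sqrt_mul zero_le_two, mul_assoc]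

/-- Decay of the geometric mean of greedy distances under exponential Kolmogorov
width decay (Corollary 2, Wenzel–Santin–Haasdonk 2021, exponential case), with
`c₁ = 2^{-(2+α)} c₀`. -/
theorem greedy_geometric_mean_decay_exponential {H : Type*} [NormedAddCommGroup H]
    [InnerProductSpace ℝ H] [CompleteSpace H]
    (F : Set H) (hFc : IsCompact F) (hF1 : ∀ f ∈ F, ‖f‖ ≤ 1)
    (f : ℕ → H) (hf : ∀ n, f n ∈ F)
    (ν : ℕ → ℝ)
    (hν : ∀ n, ν n = Metric.infDist (f n)
      ((Submodule.span ℝ (f '' Set.Iio n) : Submodule ℝ H) : Set H))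
    (C₀ c₀ α : ℝ) (hC₀ : 0 < C₀) (hc₀ : 0 < c₀) (hα : 0 < α)
    (hd : ∀ n : ℕ, 1 ≤ n → dnWidth n F ≤ C₀ * Real.exp (-c₀ * (n : ℝ) ^ α))
    (n : ℕ) (hn : 2 ≤ n) :
    (∏ i ∈ Finset.Icc (n + 1) (2 * n), ν i) ^ ((n : ℝ)⁻¹)
      ≤ Real.sqrt (2 * max 1 C₀) *
        Real.exp (-((2 : ℝ) ^ (-(2 + α)) * c₀) * (n : ℝ) ^ α) :=
  greedy_geometric_mean_decay_exponential_general F hF1 f hf ν hν C₀ c₀ α hC₀ hc₀ hα hd n hn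
end
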